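/- Under Assumptions (A2) and (A3), for any two inputs u = (X,x,y,P,p,r) and ǔ = (X̌,x̌,y̌,P̌,p̌,ř) in (ℝⁿ)^{2N₁+4N₂}, the terminal maps G_{Pⁱ}(u) := ∂ₓg₁ⁱ(Xⁱ,ν^{N₁}) + (1/N₁)Σ_k∂_μg₁ᵏ(Xᵏ,ν^{N₁})(Xⁱ), G_{yʲ}(u) := ∂ₓg₂ʲ(xʲ), G_{pʲ}(u) := −c_gʲ rʲ satisfy the monotonicity inequality Σ_{i=1}^{N₁}⟨ΔG_{Pⁱ}, ΔXⁱ⟩ + Σ_{j=1}^{N₂}(⟨ΔG_{yʲ}, Δxʲ⟩ + ⟨(−1)ΔG_{pʲ}, Δrʲ⟩) ≥ γ₁^g Σ_{i=1}^{N₁}|ΔXⁱ|² + γ₂^g Σ_{j=1}^{N₂}(|Δxʲ|² + |Δrʲ|²), where Δ denotes the difference of the two inputs (e.g. ΔXⁱ := Xⁱ − X̌ⁱ, ΔG_{Pⁱ} := G_{Pⁱ}(u) − G_{Pⁱ}(ǔ)). -/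

import Mathlib

open MeasureTheory ProbabilityTheory Filter
open scoped RealInnerProductSpace ENNReal NNReal

set_option linter.unusedVariables false
set_option maxHeartbeats 1000000

noncomputable section

/-- `ℝᵏ` as a Euclidean space. -/
abbrev Vec (k : ℕ) : Type := EuclideanSpace ℝ (Fin k)

/-- The square root of the second moment `M₂(μ)` of a measure on `ℝᵏ`. -/
def M2 {k : ℕ} (μ : MeasureTheory.Measure (Vec k)) : ℝ :=
  (∫ x, ‖x‖ ^ 2 ∂μ) ^ ((1 : ℝ) / 2)

/-- The 2-Wasserstein distance between two measures on `ℝᵏ`, defined through couplings. -/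
def W2 {k : ℕ} (μ ν : MeasureTheory.Measure (Vec k)) : ℝ :=
  sInf { r : ℝ | ∃ π : MeasureTheory.Measure (Vec k × Vec k), IsProbabilityMeasure π ∧
    π.map Prod.fst = μ ∧ π.map Prod.snd = ν ∧
    r = (∫ p, ‖p.1 - p.2‖ ^ 2 ∂π) ^ ((1 : ℝ) / 2) }

variable {Ω : Type} {mΩ : MeasurableSpace Ω}

/-- The space `H²(𝔽;ℝᵏ)` of progressively measurable, square integrable processes. -/
def MemH2 (F : Filtration ℝ mΩ) (P : Measure Ω) (T : ℝ) {k : ℕ} (Z : ℝ → Ω → Vec k) : Prop :=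
  ProgMeasurable F Z ∧
    ∫⁻ ω, ENNReal.ofReal (∫ t in Set.Icc (0 : ℝ) T, ‖Z t ω‖ ^ 2) ∂P < ⊤

/-- The space `𝕊²(𝔽;ℝᵏ)` of continuous adapted processes with square integrable running
supremum. -/
def MemS2 (F : Filtration ℝ mΩ) (P : Measure Ω) (T : ℝ) {k : ℕ} (X : ℝ → Ω → Vec k) : Prop :=
  Adapted F X ∧ (∀ ω, ContinuousOn (fun t => X t ω) (Set.Icc (0 : ℝ) T)) ∧
    ∫⁻ ω, ENNReal.ofReal (⨆ t ∈ Set.Icc (0 : ℝ) T, ‖X t ω‖ ^ 2) ∂P < ⊤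

/-- `L²(𝓖;ℝᵏ)`: square-integrable random variables measurable w.r.t. a sub-σ-algebra `𝓖`. -/
def MemL2 (G : MeasurableSpace Ω) (P : @Measure Ω mΩ) {k : ℕ} (X : Ω → Vec k) : Prop :=
  StronglyMeasurable[G] X ∧ ∫⁻ ω, ENNReal.ofReal (‖X ω‖ ^ 2) ∂P < ⊤

/-- The empirical mean `mₖ(x)` of the first `N` entries of a family. -/
def empMean {k : ℕ} (N : ℕ) (x : ℕ → Vec k) : Vec k :=
  (N : ℝ)⁻¹ • ∑ i ∈ Finset.range N, x i

/-- The empirical measure of the first `N` entries of a family. -/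
def empMeas {k : ℕ} (N : ℕ) (x : ℕ → Vec k) : MeasureTheory.Measure (Vec k) :=
  ((N : ℝ≥0∞))⁻¹ • ∑ i ∈ Finset.range N, MeasureTheory.Measure.dirac (x i)

/-- Two processes are indistinguishable on `[0,T]`. -/
def IndistOn (P : Measure Ω) (T : ℝ) {k : ℕ} (X Y : ℝ → Ω → Vec k) : Prop :=
  ∀ᵐ ω ∂P, ∀ t ∈ Set.Icc (0 : ℝ) T, X t ω = Y t ω

/-- The measure `dt ⊗ dP` on `[0,T] × Ω`. -/
def leb2 (P : Measure Ω) (T : ℝ) : Measure (ℝ × Ω) :=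
  (volume.restrict (Set.Icc (0 : ℝ) T)).prod P


/-- The market model: probabilistic setup, information processes, cost data and
Assumptions (A2) (the non-cooperative population) and (A3) (the cooperative population). -/
structure Mkt (n m d₀ d₁ d₂ : ℕ) (Ω : Type) [mΩ : MeasurableSpace Ω] (P : Measure Ω) where
  /-- time horizon -/
  T : ℝ
  hT : 0 < T
  /-- the full filtration `𝔽` -/
  F : Filtration ℝ mΩ
  /-- the common-noise filtration `𝔽⁰` generated by `W⁰` -/
  F0 : Filtration ℝ mΩ
  /-- the common-noise σ-algebra `𝓕⁰` -/
  G0 : MeasurableSpace Ω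
  hG0 : G0 ≤ mΩ
  hF0F : ∀ t : ℝ, F0 t ≤ F t
  hF0G0 : ∀ t : ℝ, F0 t ≤ G0
  /-- the filtration `𝔽^{1,i}` of agent `i` of the cooperative population -/
  F1 : ℕ → Filtration ℝ mΩ
  /-- the filtration `𝔽^{2,j}` of agent `j` of the non-cooperative population -/
  F2 : ℕ → Filtration ℝ mΩ
  hF1F : ∀ (i : ℕ) (t : ℝ), F1 i t ≤ F t
  hF2F : ∀ (j : ℕ) (t : ℝ), F2 j t ≤ F t
  hF01 : ∀ (i : ℕ) (t : ℝ), F0 t ≤ F1 i t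
  hF02 : ∀ (j : ℕ) (t : ℝ), F0 t ≤ F2 j t
  /-- the common bound `L` -/
  L : ℝ
  hL : 0 < L
  γ1f : ℝ
  γ1g : ℝ
  γ2f : ℝ
  γ2g : ℝ
  lamβ : ℝ
  lamϖ : ℝ
  hγ1f : 0 < γ1f
  hγ1g : 0 < γ1g
  hγ2f : 0 < γ2f
  hγ2g : 0 < γ2g
  hlamβ : 0 < lamβ
  hlamϖ : 0 < lamϖ
  /-- the trading-cost matrix process `Λ` -/
  Λ : ℝ → Ω → (Vec n →L[ℝ] Vec n)
  /-- `Λ̄ := Λ⁻¹` -/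
  Λinv : ℝ → Ω → (Vec n →L[ℝ] Vec n)
  b : ℝ → Ω → ℝ
  ρ₁ : ℝ → Ω → ℝ
  ρ₂ : ℝ → Ω → ℝ
  hΛprog : ProgMeasurable F0 Λ
  hbprog : ProgMeasurable F0 b
  hρ₁prog : ProgMeasurable F0 ρ₁
  hρ₂prog : ProgMeasurable F0 ρ₂
  hΛsymm : ∀ (t : ℝ) (ω : Ω) (u v : Vec n), ⟪Λ t ω u, v⟫ = ⟪u, Λ t ω v⟫
  hΛpos : ∀ (t : ℝ) (ω : Ω) (v : Vec n), v ≠ 0 → 0 < ⟪Λ t ω v, v⟫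
  hΛΛinv : ∀ (t : ℝ) (ω : Ω), (Λ t ω).comp (Λinv t ω) = ContinuousLinearMap.id ℝ (Vec n)
  hΛinvΛ : ∀ (t : ℝ) (ω : Ω), (Λinv t ω).comp (Λ t ω) = ContinuousLinearMap.id ℝ (Vec n)
  hΛbdd : ∀ (t : ℝ) (ω : Ω), ‖Λ t ω‖ ≤ L ∧ ‖Λinv t ω‖ ≤ L
  hbbdd : ∀ (t : ℝ) (ω : Ω), 0 ≤ b t ω ∧ b t ω ≤ L
  hρ₁bdd : ∀ (t : ℝ) (ω : Ω), |ρ₁ t ω| ≤ L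
  /-- (A3 vi) lower bound on `ρ₂`; it implies (A2 v) `b²/(2γ₂^f) ≤ ρ₂ ≤ L` -/
  hρ₂bdd : ∀ (t : ℝ) (ω : Ω), max (1 / L) (2 * (b t ω) ^ 2 / γ2f) ≤ ρ₂ t ω ∧ ρ₂ t ω ≤ L
  /-- common market information process `c⁰` -/
  c0 : ℝ → Ω → Vec m
  hc0prog : ProgMeasurable F0 c0
  hc0L2 : ∃ K : ℝ, ∀ t : ℝ, ∫ ω, ‖c0 t ω‖ ^ 2 ∂P ≤ K
  /-- idiosyncratic information processes `cⁱ` of the cooperative population -/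
  c1 : ℕ → ℝ → Ω → Vec m
  /-- idiosyncratic information processes `𝔠ʲ` of the non-cooperative population -/
  c2 : ℕ → ℝ → Ω → Vec m
  hc1prog : ∀ i : ℕ, ProgMeasurable (F1 i) (c1 i)
  hc2prog : ∀ j : ℕ, ProgMeasurable (F2 j) (c2 j)
  hc1L2 : ∃ K : ℝ, ∀ (i : ℕ) (t : ℝ), ∫ ω, ‖c1 i t ω‖ ^ 2 ∂P ≤ K
  hc2L2 : ∃ K : ℝ, ∀ (j : ℕ) (t : ℝ), ∫ ω, ‖c2 j t ω‖ ^ 2 ∂P ≤ K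
  /-- initial inventories `ξⁱ` of the cooperative population -/
  ξ : ℕ → Ω → Vec n
  /-- initial inventories `ηʲ` of the non-cooperative population -/
  η : ℕ → Ω → Vec n
  hξmeas : ∀ i : ℕ, StronglyMeasurable[F1 i 0] (ξ i)
  hηmeas : ∀ j : ℕ, StronglyMeasurable[F2 j 0] (η j)
  hξL2 : ∀ i : ℕ, ∫⁻ ω, ENNReal.ofReal (‖ξ i ω‖ ^ 2) ∂P < ⊤
  hηL2 : ∀ j : ℕ, ∫⁻ ω, ENNReal.ofReal (‖η j ω‖ ^ 2) ∂P < ⊤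
  /-- order-flow noise `∫₀ᵗ σ₁ⁱ'⁰ dW⁰ + ∫₀ᵗ σ₁ⁱ dWⁱ` of cooperative agent `i` -/
  MX : ℕ → ℝ → Ω → Vec n
  /-- order-flow noise `∫₀ᵗ σ₂ʲ'⁰ dW⁰ + ∫₀ᵗ σ₂ʲ dBʲ` of non-cooperative agent `j` -/
  Mx : ℕ → ℝ → Ω → Vec n
  hMX : ∀ i : ℕ, Martingale (MX i) (F1 i) P
  hMx : ∀ j : ℕ, Martingale (Mx j) (F2 j) P
  hMX0 : ∀ (i : ℕ) (ω : Ω), MX i 0 ω = 0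
  hMx0 : ∀ (j : ℕ) (ω : Ω), Mx j 0 ω = 0
  hMXS2 : ∀ i : ℕ, MemS2 F P T (MX i)
  hMxS2 : ∀ j : ℕ, MemS2 F P T (Mx j)
  -- ===== (A2): data of the non-cooperative population =====
  l₂ : ℝ → Vec m → Vec m → Vec n
  σ₂0 : ℝ → Vec m → Vec m → (Vec d₀ →L[ℝ] Vec n)
  σ₂ : ℝ → Vec m → Vec m → (Vec d₂ →L[ℝ] Vec n)
  hl₂ : ∀ (t : ℝ) (c0' c : Vec m),
    ‖l₂ t c0' c‖ + ‖σ₂0 t c0' c‖ + ‖σ₂ t c0' c‖ ≤ L * (1 + ‖c0'‖ + ‖c‖)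
  /-- running cost component `f̄₂` -/
  fb₂ : ℝ → Vec n → Vec m → Vec m → ℝ
  /-- terminal cost `g₂` -/
  g₂ : Vec n → Vec m → Vec m → ℝ
  hfb₂g₂ : ∀ (t : ℝ) (x : Vec n) (c0' c : Vec m),
    |fb₂ t x c0' c| + |g₂ x c0' c| ≤ L * (1 + ‖x‖ ^ 2 + ‖c0'‖ ^ 2 + ‖c‖ ^ 2)
  cf : ℝ → Vec m → Vec m → (Vec n →L[ℝ] Vec n)
  hf : ℝ → Vec m → Vec m → Vec n
  cg : Vec m → Vec m → (Vec n →L[ℝ] Vec n)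
  hg : Vec m → Vec m → Vec n
  /-- (A2 iv): `∂ₓf̄₂` is affine: `∂ₓf̄₂(t,x,c⁰,𝔠) = c_f(t,c⁰,𝔠)x + h_f(t,c⁰,𝔠)` -/
  hfb₂grad : ∀ (t : ℝ) (c0' c : Vec m) (x : Vec n),
    HasGradientAt (fun y => fb₂ t y c0' c) (cf t c0' c x + hf t c0' c) x
  hg₂grad : ∀ (c0' c : Vec m) (x : Vec n),
    HasGradientAt (fun y => g₂ y c0' c) (cg c0' c x + hg c0' c) x
  hcfsymm : ∀ (t : ℝ) (c0' c : Vec m) (u v : Vec n),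
    ⟪cf t c0' c u, v⟫ = ⟪u, cf t c0' c v⟫
  hcgsymm : ∀ (c0' c : Vec m) (u v : Vec n), ⟪cg c0' c u, v⟫ = ⟪u, cg c0' c v⟫
  hhbdd : ∀ (t : ℝ) (c0' c : Vec m), ‖hf t c0' c‖ + ‖hg c0' c‖ ≤ L * (1 + ‖c0'‖ + ‖c‖)
  hcbdd : ∀ (t : ℝ) (c0' c : Vec m), ‖cf t c0' c‖ + ‖cg c0' c‖ ≤ L
  hcfpos : ∀ (t : ℝ) (c0' c : Vec m) (θ : Vec n), γ2f * ‖θ‖ ^ 2 ≤ ⟪θ, cf t c0' c θ⟫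
  hcgpos : ∀ (c0' c : Vec m) (θ : Vec n), γ2g * ‖θ‖ ^ 2 ≤ ⟪θ, cg c0' c θ⟫
  -- ===== (A3): data of the cooperative population =====
  /-- the closed convex control domain `A₁ ⊆ ℝⁿ` -/
  A₁ : Set (Vec n)
  hA₁closed : IsClosed A₁
  hA₁convex : Convex ℝ A₁
  hA₁ne : A₁.Nonempty
  l₁ : ℝ → Vec m → Vec m → Vec n
  σ₁0 : ℝ → Vec m → Vec m → (Vec d₀ →L[ℝ] Vec n)
  σ₁ : ℝ → Vec m → Vec m → (Vec d₁ →L[ℝ] Vec n)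
  hl₁ : ∀ (t : ℝ) (c0' c : Vec m),
    ‖l₁ t c0' c‖ + ‖σ₁0 t c0' c‖ + ‖σ₁ t c0' c‖ ≤ L * (1 + ‖c0'‖ + ‖c‖)
  /-- running cost `f₁(t,x,μ,ϖ,β,c⁰,c)` of a cooperative agent -/
  f₁ : ℝ → Vec n → MeasureTheory.Measure (Vec n) → Vec n → Vec n → Vec m → Vec m → ℝ
  /-- terminal cost `g₁(x,μ,c⁰,c)` of a cooperative agent -/
  g₁ : Vec n → MeasureTheory.Measure (Vec n) → Vec m → Vec m → ℝ
  hf₁growth : ∀ (t : ℝ) (x : Vec n) (μ : MeasureTheory.Measure (Vec n)) (ϖ β : Vec n)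
      (c0' c : Vec m), β ∈ A₁ →
    |f₁ t x μ ϖ β c0' c| ≤
      L * (1 + ‖x‖ ^ 2 + M2 μ ^ 2 + ‖ϖ‖ ^ 2 + ‖β‖ ^ 2 + ‖c0'‖ ^ 2 + ‖c‖ ^ 2)
  hg₁growth : ∀ (x : Vec n) (μ : MeasureTheory.Measure (Vec n)) (c0' c : Vec m),
    |g₁ x μ c0' c| ≤ L * (1 + ‖x‖ ^ 2 + M2 μ ^ 2 + ‖c0'‖ ^ 2 + ‖c‖ ^ 2)
  hf₁lip : ∀ (t : ℝ) (x : Vec n) (μ : MeasureTheory.Measure (Vec n)) (ϖ β : Vec n)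
      (x' : Vec n) (μ' : MeasureTheory.Measure (Vec n)) (ϖ' β' : Vec n) (c0' c : Vec m),
      β ∈ A₁ → β' ∈ A₁ →
    |f₁ t x μ ϖ β c0' c - f₁ t x' μ' ϖ' β' c0' c| ≤
      L * (1 + ‖x‖ + ‖x'‖ + M2 μ + M2 μ' + ‖ϖ‖ + ‖ϖ'‖ + ‖c0'‖ + ‖c‖) *
        (‖x - x'‖ + W2 μ μ' + ‖ϖ - ϖ'‖ + ‖β - β'‖)
  hg₁lip : ∀ (x : Vec n) (μ : MeasureTheory.Measure (Vec n)) (x' : Vec n)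
      (μ' : MeasureTheory.Measure (Vec n)) (c0' c : Vec m),
    |g₁ x μ c0' c - g₁ x' μ' c0' c| ≤
      L * (1 + ‖x‖ + ‖x'‖ + M2 μ + M2 μ' + ‖c0'‖ + ‖c‖) * (‖x - x'‖ + W2 μ μ')
  /-- `∂ₓ f₁` -/
  Dxf₁ : ℝ → Vec n → MeasureTheory.Measure (Vec n) → Vec n → Vec n → Vec m → Vec m → Vec n
  /-- `∂_ϖ f₁` -/
  Dϖf₁ : ℝ → Vec n → MeasureTheory.Measure (Vec n) → Vec n → Vec n → Vec m → Vec m → Vec n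
  /-- `∂_β f₁` -/
  Dβf₁ : ℝ → Vec n → MeasureTheory.Measure (Vec n) → Vec n → Vec n → Vec m → Vec m → Vec n
  /-- the L-derivative `∂_μ f₁(·)(v)` -/
  Dμf₁ : ℝ → Vec n → MeasureTheory.Measure (Vec n) → Vec n → Vec n → Vec m → Vec m →
    Vec n → Vec n
  /-- `∂ₓ g₁` -/
  Dxg₁ : Vec n → MeasureTheory.Measure (Vec n) → Vec m → Vec m → Vec n
  /-- the L-derivative `∂_μ g₁(·)(v)` -/
  Dμg₁ : Vec n → MeasureTheory.Measure (Vec n) → Vec m → Vec m → Vec n → Vec n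
  hf₁dx : ∀ (t : ℝ) (x : Vec n) (μ : MeasureTheory.Measure (Vec n)) (ϖ β : Vec n)
      (c0' c : Vec m),
    HasGradientAt (fun z => f₁ t z μ ϖ β c0' c) (Dxf₁ t x μ ϖ β c0' c) x
  hf₁dϖ : ∀ (t : ℝ) (x : Vec n) (μ : MeasureTheory.Measure (Vec n)) (ϖ β : Vec n)
      (c0' c : Vec m),
    HasGradientAt (fun z => f₁ t x μ z β c0' c) (Dϖf₁ t x μ ϖ β c0' c) ϖ
  hf₁dβ : ∀ (t : ℝ) (x : Vec n) (μ : MeasureTheory.Measure (Vec n)) (ϖ β : Vec n)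
      (c0' c : Vec m),
    HasGradientAt (fun z => f₁ t x μ ϖ z c0' c) (Dβf₁ t x μ ϖ β c0' c) β
  hg₁dx : ∀ (x : Vec n) (μ : MeasureTheory.Measure (Vec n)) (c0' c : Vec m),
    HasGradientAt (fun z => g₁ z μ c0' c) (Dxg₁ x μ c0' c) x
  hDf₁lip : ∀ (t : ℝ) (x : Vec n) (μ : MeasureTheory.Measure (Vec n)) (ϖ β : Vec n)
      (x' : Vec n) (μ' : MeasureTheory.Measure (Vec n)) (ϖ' β' : Vec n) (v v' : Vec n)
      (c0' c : Vec m),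
    (‖Dxf₁ t x μ ϖ β c0' c - Dxf₁ t x' μ' ϖ' β' c0' c‖ +
      ‖Dϖf₁ t x μ ϖ β c0' c - Dϖf₁ t x' μ' ϖ' β' c0' c‖ +
      ‖Dβf₁ t x μ ϖ β c0' c - Dβf₁ t x' μ' ϖ' β' c0' c‖ ≤
        L * (‖x - x'‖ + W2 μ μ' + ‖ϖ - ϖ'‖ + ‖β - β'‖)) ∧
    ‖Dμf₁ t x μ ϖ β c0' c v - Dμf₁ t x' μ' ϖ' β' c0' c v'‖ ≤
      L * (‖x - x'‖ + W2 μ μ' + ‖ϖ - ϖ'‖ + ‖β - β'‖ + ‖v - v'‖)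
  hDg₁lip : ∀ (x : Vec n) (μ : MeasureTheory.Measure (Vec n)) (x' : Vec n)
      (μ' : MeasureTheory.Measure (Vec n)) (v v' : Vec n) (c0' c : Vec m),
    (‖Dxg₁ x μ c0' c - Dxg₁ x' μ' c0' c‖ ≤ L * (‖x - x'‖ + W2 μ μ')) ∧
    ‖Dμg₁ x μ c0' c v - Dμg₁ x' μ' c0' c v'‖ ≤ L * (‖x - x'‖ + W2 μ μ' + ‖v - v'‖)
  hDf₁growth : ∀ (t : ℝ) (x : Vec n) (μ : MeasureTheory.Measure (Vec n)) (ϖ β v : Vec n)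
      (c0' c : Vec m),
    ‖Dxf₁ t x μ ϖ β c0' c‖ + ‖Dϖf₁ t x μ ϖ β c0' c‖ + ‖Dβf₁ t x μ ϖ β c0' c‖ +
      ‖Dμf₁ t x μ ϖ β c0' c v‖ ≤
      L * (1 + ‖x‖ + M2 μ + ‖ϖ‖ + ‖β‖ + ‖v‖ + ‖c0'‖ + ‖c‖)
  hDg₁growth : ∀ (x : Vec n) (μ : MeasureTheory.Measure (Vec n)) (v : Vec n) (c0' c : Vec m),
    ‖Dxg₁ x μ c0' c‖ + ‖Dμg₁ x μ c0' c v‖ ≤ L * (1 + ‖x‖ + M2 μ + ‖v‖ + ‖c0'‖ + ‖c‖)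
  /-- (A3 iv): joint convexity of `f₁` in `(x,μ,ϖ,β)`, stated via couplings -/
  hf₁convex : ∀ (t : ℝ) (x : Vec n) (μ : MeasureTheory.Measure (Vec n)) (ϖ β : Vec n)
      (x' : Vec n) (μ' : MeasureTheory.Measure (Vec n)) (ϖ' β' : Vec n) (c0' c : Vec m),
      β ∈ A₁ → β' ∈ A₁ →
    ∀ π : MeasureTheory.Measure (Vec n × Vec n), IsProbabilityMeasure π →
      π.map Prod.fst = μ → π.map Prod.snd = μ' →
      f₁ t x' μ' ϖ' β' c0' c - f₁ t x μ ϖ β c0' c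
        - ⟪Dxf₁ t x μ ϖ β c0' c, x' - x⟫ - ⟪Dϖf₁ t x μ ϖ β c0' c, ϖ' - ϖ⟫
        - ⟪Dβf₁ t x μ ϖ β c0' c, β' - β⟫
        - ∫ p, ⟪Dμf₁ t x μ ϖ β c0' c p.1, p.2 - p.1⟫ ∂π
      ≥ γ1f / 2 * ‖x' - x‖ ^ 2 + lamβ / 2 * ‖β' - β‖ ^ 2 + lamϖ / 2 * ‖ϖ' - ϖ‖ ^ 2
  /-- (A3 v): joint convexity of `g₁` in `(x,μ)`, stated via couplings -/
  hg₁convex : ∀ (x : Vec n) (μ : MeasureTheory.Measure (Vec n)) (x' : Vec n)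
      (μ' : MeasureTheory.Measure (Vec n)) (c0' c : Vec m),
    ∀ π : MeasureTheory.Measure (Vec n × Vec n), IsProbabilityMeasure π →
      π.map Prod.fst = μ → π.map Prod.snd = μ' →
      g₁ x' μ' c0' c - g₁ x μ c0' c - ⟪Dxg₁ x μ c0' c, x' - x⟫
        - ∫ p, ⟪Dμg₁ x μ c0' c p.1, p.2 - p.1⟫ ∂π
      ≥ γ1g / 2 * ‖x' - x‖ ^ 2


namespace Mkt

variable {n m d₀ d₁ d₂ : ℕ} {Ω : Type} [mΩ : MeasurableSpace Ω] {P : Measure Ω}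

/-- `l₂ʲ(t) := l₂(t,c⁰_t,𝔠ʲ_t)` -/
def l₂j (M : Mkt n m d₀ d₁ d₂ Ω P) (j : ℕ) (t : ℝ) (ω : Ω) : Vec n :=
  M.l₂ t (M.c0 t ω) (M.c2 j t ω)

/-- `∂ₓf̄₂ʲ(t,x) = c_fʲ(t)x + h_fʲ(t)` -/
def gradfb₂ (M : Mkt n m d₀ d₁ d₂ Ω P) (j : ℕ) (t : ℝ) (ω : Ω) (x : Vec n) : Vec n :=
  M.cf t (M.c0 t ω) (M.c2 j t ω) x + M.hf t (M.c0 t ω) (M.c2 j t ω)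

/-- `∂ₓg₂ʲ(x) = c_gʲ x + h_gʲ` -/
def gradg₂ (M : Mkt n m d₀ d₁ d₂ Ω P) (j : ℕ) (ω : Ω) (x : Vec n) : Vec n :=
  M.cg (M.c0 M.T ω) (M.c2 j M.T ω) x + M.hg (M.c0 M.T ω) (M.c2 j M.T ω)

/-- `c_fʲ(t)` -/
def cfj (M : Mkt n m d₀ d₁ d₂ Ω P) (j : ℕ) (t : ℝ) (ω : Ω) : Vec n →L[ℝ] Vec n :=
  M.cf t (M.c0 t ω) (M.c2 j t ω)

/-- `c_gʲ` -/
def cgj (M : Mkt n m d₀ d₁ d₂ Ω P) (j : ℕ) (ω : Ω) : Vec n →L[ℝ] Vec n :=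
  M.cg (M.c0 M.T ω) (M.c2 j M.T ω)

/-- `l₁ⁱ(t) := l₁(t,c⁰_t,cⁱ_t)` -/
def l₁i (M : Mkt n m d₀ d₁ d₂ Ω P) (i : ℕ) (t : ℝ) (ω : Ω) : Vec n :=
  M.l₁ t (M.c0 t ω) (M.c1 i t ω)

/-- `f₁ⁱ(t,x,μ,ϖ,β) := f₁(t,x,μ,ϖ,β,c⁰_t,cⁱ_t)` -/
def f₁i (M : Mkt n m d₀ d₁ d₂ Ω P) (i : ℕ) (t : ℝ) (ω : Ω) (x : Vec n)
    (μ : MeasureTheory.Measure (Vec n)) (ϖ β : Vec n) : ℝ :=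
  M.f₁ t x μ ϖ β (M.c0 t ω) (M.c1 i t ω)

/-- `g₁ⁱ(x,μ) := g₁(x,μ,c⁰_T,cⁱ_T)` -/
def g₁i (M : Mkt n m d₀ d₁ d₂ Ω P) (i : ℕ) (ω : Ω) (x : Vec n)
    (μ : MeasureTheory.Measure (Vec n)) : ℝ :=
  M.g₁ x μ (M.c0 M.T ω) (M.c1 i M.T ω)

/-- `∂ₓf₁ⁱ` -/
def Dxf₁i (M : Mkt n m d₀ d₁ d₂ Ω P) (i : ℕ) (t : ℝ) (ω : Ω) (x : Vec n)
    (μ : MeasureTheory.Measure (Vec n)) (ϖ β : Vec n) : Vec n :=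
  M.Dxf₁ t x μ ϖ β (M.c0 t ω) (M.c1 i t ω)

/-- `∂_ϖf₁ⁱ` -/
def Dϖf₁i (M : Mkt n m d₀ d₁ d₂ Ω P) (i : ℕ) (t : ℝ) (ω : Ω) (x : Vec n)
    (μ : MeasureTheory.Measure (Vec n)) (ϖ β : Vec n) : Vec n :=
  M.Dϖf₁ t x μ ϖ β (M.c0 t ω) (M.c1 i t ω)

/-- `∂_βf₁ⁱ` -/
def Dβf₁i (M : Mkt n m d₀ d₁ d₂ Ω P) (i : ℕ) (t : ℝ) (ω : Ω) (x : Vec n)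
    (μ : MeasureTheory.Measure (Vec n)) (ϖ β : Vec n) : Vec n :=
  M.Dβf₁ t x μ ϖ β (M.c0 t ω) (M.c1 i t ω)

/-- `∂_μf₁ⁱ(·)(v)` -/
def Dμf₁i (M : Mkt n m d₀ d₁ d₂ Ω P) (i : ℕ) (t : ℝ) (ω : Ω) (x : Vec n)
    (μ : MeasureTheory.Measure (Vec n)) (ϖ β v : Vec n) : Vec n :=
  M.Dμf₁ t x μ ϖ β (M.c0 t ω) (M.c1 i t ω) v

/-- `∂ₓg₁ⁱ` -/
def Dxg₁i (M : Mkt n m d₀ d₁ d₂ Ω P) (i : ℕ) (ω : Ω) (x : Vec n)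
    (μ : MeasureTheory.Measure (Vec n)) : Vec n :=
  M.Dxg₁ x μ (M.c0 M.T ω) (M.c1 i M.T ω)

/-- `∂_μg₁ⁱ(·)(v)` -/
def Dμg₁i (M : Mkt n m d₀ d₁ d₂ Ω P) (i : ℕ) (ω : Ω) (x : Vec n)
    (μ : MeasureTheory.Measure (Vec n)) (v : Vec n) : Vec n :=
  M.Dμg₁ x μ (M.c0 M.T ω) (M.c1 i M.T ω) v

/-- running cost `f₂ʲ(t,x,ϖ,α)` of non-cooperative agent `j` -/
def f₂j (M : Mkt n m d₀ d₁ d₂ Ω P) (j : ℕ) (t : ℝ) (ω : Ω) (x ϖ α : Vec n) : ℝ :=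
  ⟪α, ϖ⟫ + (1 / 2 : ℝ) * ⟪α, M.Λ t ω α⟫ - M.b t ω * ⟪x, ϖ⟫
    + M.fb₂ t x (M.c0 t ω) (M.c2 j t ω)

/-- state process of non-cooperative agent `j` under control `α` and exogenous price `ϖ` -/
def state2 (M : Mkt n m d₀ d₁ d₂ Ω P) (ϖ : ℝ → Ω → Vec n) (j : ℕ)
    (α : ℝ → Ω → Vec n) (t : ℝ) (ω : Ω) : Vec n :=
  M.η j ω + (∫ s in (0 : ℝ)..t, (α s ω + M.ρ₂ s ω • ϖ s ω + M.l₂j j s ω)) + M.Mx j t ω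

/-- cost functional `Jʲ(α)` of non-cooperative agent `j` (a price taker w.r.t. `ϖ`) -/
def J₂ (M : Mkt n m d₀ d₁ d₂ Ω P) (ϖ : ℝ → Ω → Vec n) (j : ℕ) (α : ℝ → Ω → Vec n) : ℝ :=
  ∫ ω, ((∫ t in (0 : ℝ)..M.T, M.f₂j j t ω (M.state2 ϖ j α t ω) (ϖ t ω) (α t ω))
    + M.g₂ (M.state2 ϖ j α M.T ω) (M.c0 M.T ω) (M.c2 j M.T ω)) ∂P

/-- optimality for the problem `inf_{α ∈ H²(𝔽;ℝⁿ)} Jʲ(α)` -/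
def IsOptimal₂ (M : Mkt n m d₀ d₁ d₂ Ω P) (ϖ : ℝ → Ω → Vec n) (j : ℕ)
    (α : ℝ → Ω → Vec n) : Prop :=
  MemH2 M.F P M.T α ∧ ∀ α' : ℝ → Ω → Vec n, MemH2 M.F P M.T α' →
    M.J₂ ϖ j α ≤ M.J₂ ϖ j α'

/-- the FBSDE of non-cooperative agent `j` for a given exogenous price process `ϖ` -/
def IsSolFBSDE₂ (M : Mkt n m d₀ d₁ d₂ Ω P) (ϖ : ℝ → Ω → Vec n) (j : ℕ)
    (x y : ℝ → Ω → Vec n) : Prop :=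
  MemS2 M.F P M.T x ∧ MemS2 M.F P M.T y ∧
  ∃ N : ℝ → Ω → Vec n, Martingale N M.F P ∧ (∀ ω, N 0 ω = 0) ∧ MemS2 M.F P M.T N ∧
    ∀ᵐ ω ∂P, ∀ t ∈ Set.Icc (0 : ℝ) M.T,
      (x t ω = M.η j ω
          + (∫ s in (0 : ℝ)..t,
              (-(M.Λinv s ω (y s ω + ϖ s ω)) + M.ρ₂ s ω • ϖ s ω + M.l₂j j s ω))
          + M.Mx j t ω) ∧
      (y t ω = M.gradg₂ j ω (x M.T ω)
          + (∫ s in t..M.T, (M.gradfb₂ j s ω (x s ω) - M.b s ω • ϖ s ω))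
          - (N M.T ω - N t ω))

/-- the market price `ϖ_t(y,β) := -m₂(y) + δ_n Λ_t m₁(β)` from pointwise data -/
def pricePt (M : Mkt n m d₀ d₁ d₂ Ω P) (N₁ N₂ : ℕ) (t : ℝ) (ω : Ω)
    (y β : ℕ → Vec n) : Vec n :=
  -empMean N₂ y + ((N₁ : ℝ) / (N₂ : ℝ)) • M.Λ t ω (empMean N₁ β)

/-- the market price process `ϖ_t(y_t,β_t)` -/
def priceProc (M : Mkt n m d₀ d₁ d₂ Ω P) (N₁ N₂ : ℕ) (y β : ℕ → ℝ → Ω → Vec n)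
    (t : ℝ) (ω : Ω) : Vec n :=
  M.pricePt N₁ N₂ t ω (fun j => y j t ω) (fun i => β i t ω)

/-- the coupled market-clearing FBSDE system of the non-cooperative population, for
given order flows `β` of the cooperative population -/
def IsSolSystem₂ (M : Mkt n m d₀ d₁ d₂ Ω P) (N₁ N₂ : ℕ)
    (β x y : ℕ → ℝ → Ω → Vec n) : Prop :=
  (∀ j < N₂, MemS2 M.F P M.T (x j) ∧ MemS2 M.F P M.T (y j)) ∧
  ∀ j < N₂, ∃ N : ℝ → Ω → Vec n,
    Martingale N M.F P ∧ (∀ ω, N 0 ω = 0) ∧ MemS2 M.F P M.T N ∧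
    ∀ᵐ ω ∂P, ∀ t ∈ Set.Icc (0 : ℝ) M.T,
      (x j t ω = M.η j ω + (∫ s in (0 : ℝ)..t,
          (-(M.Λinv s ω (y j s ω + M.priceProc N₁ N₂ y β s ω))
            + M.ρ₂ s ω • M.priceProc N₁ N₂ y β s ω + M.l₂j j s ω)) + M.Mx j t ω) ∧
      (y j t ω = M.gradg₂ j ω (x j M.T ω) + (∫ s in t..M.T,
          (M.gradfb₂ j s ω (x j s ω) - M.b s ω • M.priceProc N₁ N₂ y β s ω))
          - (N M.T ω - N t ω))

/-- a market clearing equilibrium for given cooperative order flows `β`: a price process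
`ϖ ∈ H²`, optimal responses of all non-cooperative agents, and market clearing. -/
def IsMCEquilibrium (M : Mkt n m d₀ d₁ d₂ Ω P) (N₁ N₂ : ℕ) (β : ℕ → ℝ → Ω → Vec n)
    (ϖ : ℝ → Ω → Vec n) (α : ℕ → ℝ → Ω → Vec n) : Prop :=
  MemH2 M.F P M.T ϖ ∧ (∀ j < N₂, M.IsOptimal₂ ϖ j (α j)) ∧
  ∀ᵐ p ∂(leb2 P M.T),
    (∑ j ∈ Finset.range N₂, α j p.1 p.2) + (∑ i ∈ Finset.range N₁, β i p.1 p.2) = 0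

end Mkt


namespace Mkt

variable {n m d₀ d₁ d₂ : ℕ} {Ω : Type} [mΩ : MeasurableSpace Ω] {P : Measure Ω}

/-- the Hamiltonian `H(t,X,x,y,P,p,r,β)` of the central planner in the finite-agent market -/
def Ham (M : Mkt n m d₀ d₁ d₂ Ω P) (N₁ N₂ : ℕ) (t : ℝ) (ω : Ω)
    (X x y Pv p r β : ℕ → Vec n) : ℝ :=
  (∑ i ∈ Finset.range N₁,
    (⟪Pv i, β i + M.ρ₁ t ω • M.pricePt N₁ N₂ t ω y β + M.l₁i i t ω⟫
      + M.f₁i i t ω (X i) (empMeas N₁ X) (M.pricePt N₁ N₂ t ω y β) (β i)))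
  + ∑ j ∈ Finset.range N₂,
    (⟪p j, -(M.Λinv t ω (y j + M.pricePt N₁ N₂ t ω y β))
        + M.ρ₂ t ω • M.pricePt N₁ N₂ t ω y β + M.l₂j j t ω⟫
      + ⟪r j, -(M.gradfb₂ j t ω (x j)) + M.b t ω • M.pricePt N₁ N₂ t ω y β⟫)

/-- `∂_{βⁱ}H` -/
def DβHam (M : Mkt n m d₀ d₁ d₂ Ω P) (N₁ N₂ : ℕ) (t : ℝ) (ω : Ω)
    (X x y Pv p r β : ℕ → Vec n) (i : ℕ) : Vec n :=
  Pv i + M.Dβf₁i i t ω (X i) (empMeas N₁ X) (M.pricePt N₁ N₂ t ω y β) (β i)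
    + (N₂ : ℝ)⁻¹ • M.Λ t ω (∑ k ∈ Finset.range N₁,
        M.Dϖf₁i k t ω (X k) (empMeas N₁ X) (M.pricePt N₁ N₂ t ω y β) (β k))
    + ((N₁ : ℝ) / (N₂ : ℝ)) • M.ρ₁ t ω • M.Λ t ω (empMean N₁ Pv)
    + (-(empMean N₂ p) + M.ρ₂ t ω • M.Λ t ω (empMean N₂ p))
    + M.b t ω • M.Λ t ω (empMean N₂ r)

/-- `∂_{Xⁱ}H` -/
def DXHam (M : Mkt n m d₀ d₁ d₂ Ω P) (N₁ N₂ : ℕ) (t : ℝ) (ω : Ω)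
    (X x y Pv p r β : ℕ → Vec n) (i : ℕ) : Vec n :=
  M.Dxf₁i i t ω (X i) (empMeas N₁ X) (M.pricePt N₁ N₂ t ω y β) (β i)
    + (N₁ : ℝ)⁻¹ • ∑ k ∈ Finset.range N₁,
        M.Dμf₁i k t ω (X k) (empMeas N₁ X) (M.pricePt N₁ N₂ t ω y β) (β k) (X i)

/-- `∂_{xʲ}H` -/
def DxHam (M : Mkt n m d₀ d₁ d₂ Ω P) (N₁ N₂ : ℕ) (t : ℝ) (ω : Ω)
    (X x y Pv p r β : ℕ → Vec n) (j : ℕ) : Vec n :=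
  -(M.cfj j t ω (r j))

/-- `∂_{yʲ}H` -/
def DyHam (M : Mkt n m d₀ d₁ d₂ Ω P) (N₁ N₂ : ℕ) (t : ℝ) (ω : Ω)
    (X x y Pv p r β : ℕ → Vec n) (j : ℕ) : Vec n :=
  -((N₂ : ℝ)⁻¹ • ∑ k ∈ Finset.range N₁,
      M.Dϖf₁i k t ω (X k) (empMeas N₁ X) (M.pricePt N₁ N₂ t ω y β) (β k))
    - ((N₁ : ℝ) / (N₂ : ℝ)) • M.ρ₁ t ω • empMean N₁ Pv
    - M.b t ω • empMean N₂ r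
    + M.Λinv t ω (empMean N₂ p - p j)
    - M.ρ₂ t ω • empMean N₂ p

/-- `β̂(t,u)` is a minimizer of `H(t,u,·)` over `A₁`-valued tuples -/
def IsHamMin (M : Mkt n m d₀ d₁ d₂ Ω P) (N₁ N₂ : ℕ) (t : ℝ) (ω : Ω)
    (X x y Pv p r βh : ℕ → Vec n) : Prop :=
  (∀ i : ℕ, βh i ∈ M.A₁) ∧
  ∀ β : ℕ → Vec n, (∀ i : ℕ, β i ∈ M.A₁) →
    M.Ham N₁ N₂ t ω X x y Pv p r βh ≤ M.Ham N₁ N₂ t ω X x y Pv p r β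

/-- `B_{Xⁱ}(t,u)` -/
def BXf (M : Mkt n m d₀ d₁ d₂ Ω P) (N₁ N₂ : ℕ) (t : ℝ) (ω : Ω)
    (X x y Pv p r βh : ℕ → Vec n) (i : ℕ) : Vec n :=
  βh i + M.ρ₁ t ω • M.pricePt N₁ N₂ t ω y βh + M.l₁i i t ω

/-- `B_{xʲ}(t,u)` -/
def Bxf (M : Mkt n m d₀ d₁ d₂ Ω P) (N₁ N₂ : ℕ) (t : ℝ) (ω : Ω)
    (X x y Pv p r βh : ℕ → Vec n) (j : ℕ) : Vec n :=
  -(M.Λinv t ω (y j + M.pricePt N₁ N₂ t ω y βh))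
    + M.ρ₂ t ω • M.pricePt N₁ N₂ t ω y βh + M.l₂j j t ω

/-- `B_{rʲ}(t,u)` -/
def Brf (M : Mkt n m d₀ d₁ d₂ Ω P) (N₁ N₂ : ℕ) (t : ℝ) (ω : Ω)
    (X x y Pv p r βh : ℕ → Vec n) (j : ℕ) : Vec n :=
  -(M.Λinv t ω (empMean N₂ p - p j) - M.ρ₂ t ω • empMean N₂ p
      - ((N₁ : ℝ) / (N₂ : ℝ)) • M.ρ₁ t ω • empMean N₁ Pv - M.b t ω • empMean N₂ r
      - (N₂ : ℝ)⁻¹ • ∑ k ∈ Finset.range N₁,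
          M.Dϖf₁i k t ω (X k) (empMeas N₁ X) (M.pricePt N₁ N₂ t ω y βh) (βh k))

/-- `F_{Pⁱ}(t,u)` -/
def FPf (M : Mkt n m d₀ d₁ d₂ Ω P) (N₁ N₂ : ℕ) (t : ℝ) (ω : Ω)
    (X x y Pv p r βh : ℕ → Vec n) (i : ℕ) : Vec n :=
  -(M.Dxf₁i i t ω (X i) (empMeas N₁ X) (M.pricePt N₁ N₂ t ω y βh) (βh i)
      + (N₁ : ℝ)⁻¹ • ∑ k ∈ Finset.range N₁,
          M.Dμf₁i k t ω (X k) (empMeas N₁ X) (M.pricePt N₁ N₂ t ω y βh) (βh k) (X i))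

/-- `F_{yʲ}(t,u)` -/
def Fyf (M : Mkt n m d₀ d₁ d₂ Ω P) (N₁ N₂ : ℕ) (t : ℝ) (ω : Ω)
    (X x y Pv p r βh : ℕ → Vec n) (j : ℕ) : Vec n :=
  -(M.gradfb₂ j t ω (x j)) + M.b t ω • M.pricePt N₁ N₂ t ω y βh

/-- `F_{pʲ}(t,u)` -/
def Fpf (M : Mkt n m d₀ d₁ d₂ Ω P) (N₁ N₂ : ℕ) (t : ℝ) (ω : Ω)
    (X x y Pv p r βh : ℕ → Vec n) (j : ℕ) : Vec n :=
  M.cfj j t ω (r j)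

/-- terminal map `G_{Pⁱ}(u)` -/
def GPf (M : Mkt n m d₀ d₁ d₂ Ω P) (N₁ : ℕ) (ω : Ω) (X : ℕ → Vec n) (i : ℕ) : Vec n :=
  M.Dxg₁i i ω (X i) (empMeas N₁ X)
    + (N₁ : ℝ)⁻¹ • ∑ k ∈ Finset.range N₁, M.Dμg₁i k ω (X k) (empMeas N₁ X) (X i)

/-- terminal map `G_{yʲ}(u)` -/
def Gyf (M : Mkt n m d₀ d₁ d₂ Ω P) (ω : Ω) (x : ℕ → Vec n) (j : ℕ) : Vec n :=
  M.gradg₂ j ω (x j)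

/-- terminal map `G_{pʲ}(u)` -/
def Gpf (M : Mkt n m d₀ d₁ d₂ Ω P) (ω : Ω) (r : ℕ → Vec n) (j : ℕ) : Vec n :=
  -(M.cgj j ω (r j))

/-- an admissible control profile of the cooperative population: `βⁱ ∈ 𝔸₁ = H²(𝔽;A₁)` -/
def AdmissibleCtrl (M : Mkt n m d₀ d₁ d₂ Ω P) (N₁ : ℕ) (β : ℕ → ℝ → Ω → Vec n) : Prop :=
  ∀ i < N₁, MemH2 M.F P M.T (β i) ∧ ∀ᵐ q ∂(leb2 P M.T), β i q.1 q.2 ∈ M.A₁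

/-- the state processes of both populations in the finite market under a control
profile `β` of the central planner (non-cooperative agents react optimally and the
market clears) -/
def IsStateSol (M : Mkt n m d₀ d₁ d₂ Ω P) (N₁ N₂ : ℕ)
    (β X x y : ℕ → ℝ → Ω → Vec n) : Prop :=
  (∀ i < N₁, MemS2 M.F P M.T (X i)) ∧
  (∀ j < N₂, MemS2 M.F P M.T (x j) ∧ MemS2 M.F P M.T (y j)) ∧
  (∀ i < N₁, ∀ᵐ ω ∂P, ∀ t ∈ Set.Icc (0 : ℝ) M.T,
    X i t ω = M.ξ i ω + (∫ s in (0 : ℝ)..t,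
      (β i s ω + M.ρ₁ s ω • M.priceProc N₁ N₂ y β s ω + M.l₁i i s ω)) + M.MX i t ω) ∧
  M.IsSolSystem₂ N₁ N₂ β x y

/-- the cost `J₁ⁱ(β)` of cooperative agent `i` in the finite market -/
def J₁ (M : Mkt n m d₀ d₁ d₂ Ω P) (N₁ N₂ : ℕ) (β X x y : ℕ → ℝ → Ω → Vec n) (i : ℕ) : ℝ :=
  ∫ ω, ((∫ t in (0 : ℝ)..M.T,
      M.f₁i i t ω (X i t ω) (empMeas N₁ fun k => X k t ω)
        (M.priceProc N₁ N₂ y β t ω) (β i t ω))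
    + M.g₁i i ω (X i M.T ω) (empMeas N₁ fun k => X k M.T ω)) ∂P

/-- the full system of state and adjoint FBSDEs characterizing the optimum of the
central planner's problem in the finite-agent market -/
def IsSolFull (M : Mkt n m d₀ d₁ d₂ Ω P) (N₁ N₂ : ℕ)
    (βh X x y Pv p r : ℕ → ℝ → Ω → Vec n) : Prop :=
  M.AdmissibleCtrl N₁ βh ∧
  (∀ i < N₁, MemS2 M.F P M.T (X i) ∧ MemS2 M.F P M.T (Pv i)) ∧
  (∀ j < N₂, MemS2 M.F P M.T (x j) ∧ MemS2 M.F P M.T (y j) ∧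
    MemS2 M.F P M.T (p j) ∧ MemS2 M.F P M.T (r j)) ∧
  -- `β̂_t` minimizes the Hamiltonian `H(t,u_t,·)`, `dt ⊗ dP`-a.e.
  (∀ᵐ q ∂(leb2 P M.T),
    M.IsHamMin N₁ N₂ q.1 q.2 (fun k => X k q.1 q.2) (fun k => x k q.1 q.2)
      (fun k => y k q.1 q.2) (fun k => Pv k q.1 q.2) (fun k => p k q.1 q.2)
      (fun k => r k q.1 q.2) (fun k => βh k q.1 q.2)) ∧
  -- forward equations for `Xⁱ` and backward equations for `Pⁱ`
  (∀ i < N₁, ∃ NP : ℝ → Ω → Vec n,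
    Martingale NP M.F P ∧ MemS2 M.F P M.T NP ∧
    ∀ᵐ ω ∂P, ∀ t ∈ Set.Icc (0 : ℝ) M.T,
      (X i t ω = M.ξ i ω + (∫ s in (0 : ℝ)..t,
        M.BXf N₁ N₂ s ω (fun k => X k s ω) (fun k => x k s ω) (fun k => y k s ω)
          (fun k => Pv k s ω) (fun k => p k s ω) (fun k => r k s ω)
          (fun k => βh k s ω) i) + M.MX i t ω) ∧
      (Pv i t ω = M.GPf N₁ ω (fun k => X k M.T ω) i - (∫ s in t..M.T,
        M.FPf N₁ N₂ s ω (fun k => X k s ω) (fun k => x k s ω) (fun k => y k s ω)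
          (fun k => Pv k s ω) (fun k => p k s ω) (fun k => r k s ω)
          (fun k => βh k s ω) i) - (NP M.T ω - NP t ω))) ∧
  -- equations for `xʲ, yʲ, pʲ, rʲ`
  (∀ j < N₂, ∃ Ny Np : ℝ → Ω → Vec n,
    Martingale Ny M.F P ∧ MemS2 M.F P M.T Ny ∧
    Martingale Np M.F P ∧ MemS2 M.F P M.T Np ∧
    ∀ᵐ ω ∂P, ∀ t ∈ Set.Icc (0 : ℝ) M.T,
      (x j t ω = M.η j ω + (∫ s in (0 : ℝ)..t,
        M.Bxf N₁ N₂ s ω (fun k => X k s ω) (fun k => x k s ω) (fun k => y k s ω)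
          (fun k => Pv k s ω) (fun k => p k s ω) (fun k => r k s ω)
          (fun k => βh k s ω) j) + M.Mx j t ω) ∧
      (y j t ω = M.Gyf ω (fun k => x k M.T ω) j - (∫ s in t..M.T,
        M.Fyf N₁ N₂ s ω (fun k => X k s ω) (fun k => x k s ω) (fun k => y k s ω)
          (fun k => Pv k s ω) (fun k => p k s ω) (fun k => r k s ω)
          (fun k => βh k s ω) j) - (Ny M.T ω - Ny t ω)) ∧
      (p j t ω = M.Gpf ω (fun k => r k M.T ω) j - (∫ s in t..M.T,
        M.Fpf N₁ N₂ s ω (fun k => X k s ω) (fun k => x k s ω) (fun k => y k s ω)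
          (fun k => Pv k s ω) (fun k => p k s ω) (fun k => r k s ω)
          (fun k => βh k s ω) j) - (Np M.T ω - Np t ω)) ∧
      (r j t ω = ∫ s in (0 : ℝ)..t,
        M.Brf N₁ N₂ s ω (fun k => X k s ω) (fun k => x k s ω) (fun k => y k s ω)
          (fun k => Pv k s ω) (fun k => p k s ω) (fun k => r k s ω)
          (fun k => βh k s ω) j))

end Mkt


namespace Mkt

variable {n m d₀ d₁ d₂ : ℕ} {Ω : Type} [mΩ : MeasurableSpace Ω] {P : Measure Ω}

section MeanField

variable [StandardBorelSpace Ω] [Nonempty Ω] [IsFiniteMeasure P]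

/-- the `𝓕⁰`-conditional law `𝓛⁰(X)` of a random variable -/
def condLawG (M : Mkt n m d₀ d₁ d₂ Ω P) {γ : Type} [MeasurableSpace γ]
    (X : Ω → γ) (ω : Ω) : MeasureTheory.Measure γ :=
  (condExpKernel P M.G0 ω).map X

/-- the mean-field price `π_t(y,β) := -E⁰[y] + δ_n Λ_t E⁰[β]` -/
def mfPrice (M : Mkt n m d₀ d₁ d₂ Ω P) (δn : ℝ) (t : ℝ) (y β : Ω → Vec n) (ω : Ω) : Vec n :=
  -((P[y|M.G0]) ω) + δn • M.Λ t ω ((P[β|M.G0]) ω)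

/-- the lifted Hamiltonian `𝓗(t,Xⁱ,xʲ,yʲ,Pⁱ,pʲ,rʲ,βⁱ)` of the conditional extended
mean-field control problem -/
def liftedHam (M : Mkt n m d₀ d₁ d₂ Ω P) (δn : ℝ) (i j : ℕ) (t : ℝ)
    (Xi xj yj Pi pj rj βi : Ω → Vec n) : ℝ :=
  ∫ ω,
    (⟪Pi ω, βi ω + M.ρ₁ t ω • M.mfPrice δn t yj βi ω + M.l₁i i t ω⟫
      + M.f₁i i t ω (Xi ω) (M.condLawG Xi ω) (M.mfPrice δn t yj βi ω) (βi ω)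
      + δn⁻¹ * (⟪pj ω, -(M.Λinv t ω (yj ω + M.mfPrice δn t yj βi ω))
            + M.ρ₂ t ω • M.mfPrice δn t yj βi ω + M.l₂j j t ω⟫
          + ⟪rj ω, -(M.gradfb₂ j t ω (xj ω)) + M.b t ω • M.mfPrice δn t yj βi ω⟫)) ∂P

/-- the Fréchet derivative `D_{βⁱ}𝓗` -/
def DβliftH (M : Mkt n m d₀ d₁ d₂ Ω P) (δn : ℝ) (i j : ℕ) (t : ℝ)
    (Xi xj yj Pi pj rj βi : Ω → Vec n) (ω : Ω) : Vec n :=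
  Pi ω + M.Dβf₁i i t ω (Xi ω) (M.condLawG Xi ω) (M.mfPrice δn t yj βi ω) (βi ω)
    + δn • M.Λ t ω ((P[fun ω' => M.Dϖf₁i i t ω' (Xi ω') (M.condLawG Xi ω')
        (M.mfPrice δn t yj βi ω') (βi ω')|M.G0]) ω)
    + δn • M.ρ₁ t ω • M.Λ t ω ((P[Pi|M.G0]) ω)
    + (-((P[pj|M.G0]) ω) + M.ρ₂ t ω • M.Λ t ω ((P[pj|M.G0]) ω))
    + M.b t ω • M.Λ t ω ((P[rj|M.G0]) ω)

/-- the Fréchet derivative `D_{Xⁱ}𝓗`; the contribution of the independent conditional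
copy `Ẽ⁰[∂_μf̃₁ⁱ(t,X̃ⁱ,μ,π,β̃ⁱ)(Xⁱ)]` is written as an integral against the conditional
law of `(Xⁱ, βⁱ, cⁱ_t)` -/
def DXliftH (M : Mkt n m d₀ d₁ d₂ Ω P) (δn : ℝ) (i j : ℕ) (t : ℝ)
    (Xi xj yj Pi pj rj βi : Ω → Vec n) (ω : Ω) : Vec n :=
  M.Dxf₁i i t ω (Xi ω) (M.condLawG Xi ω) (M.mfPrice δn t yj βi ω) (βi ω)
    + ∫ z : Vec n × Vec n × Vec m,
        M.Dμf₁ t z.1 (M.condLawG Xi ω) (M.mfPrice δn t yj βi ω) z.2.1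
          (M.c0 t ω) z.2.2 (Xi ω)
        ∂(M.condLawG (fun ω' => (Xi ω', βi ω', M.c1 i t ω')) ω)

/-- the Fréchet derivative `D_{xʲ}𝓗` -/
def DxliftH (M : Mkt n m d₀ d₁ d₂ Ω P) (δn : ℝ) (i j : ℕ) (t : ℝ)
    (Xi xj yj Pi pj rj βi : Ω → Vec n) (ω : Ω) : Vec n :=
  δn⁻¹ • (-(M.cfj j t ω (rj ω)))

/-- the Fréchet derivative `D_{yʲ}𝓗` -/
def DyliftH (M : Mkt n m d₀ d₁ d₂ Ω P) (δn : ℝ) (i j : ℕ) (t : ℝ)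
    (Xi xj yj Pi pj rj βi : Ω → Vec n) (ω : Ω) : Vec n :=
  -((P[fun ω' => M.Dϖf₁i i t ω' (Xi ω') (M.condLawG Xi ω')
      (M.mfPrice δn t yj βi ω') (βi ω')|M.G0]) ω)
    - M.ρ₁ t ω • ((P[Pi|M.G0]) ω)
    + δn⁻¹ • (M.Λinv t ω ((P[pj|M.G0]) ω - pj ω) - M.ρ₂ t ω • ((P[pj|M.G0]) ω)
        - M.b t ω • ((P[rj|M.G0]) ω))

/-- `β̂ⁱ(t,u_t)` is the minimizer of `𝓗(t,u_t,·)` over `L²(𝓕_t^{1,i};A₁)` -/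
def IsLiftedMin (M : Mkt n m d₀ d₁ d₂ Ω P) (δn : ℝ) (i j : ℕ) (t : ℝ)
    (Xi xj yj Pi pj rj βi : Ω → Vec n) : Prop :=
  MemL2 (M.F1 i t) P βi ∧ (∀ᵐ ω ∂P, βi ω ∈ M.A₁) ∧
  ∀ βi' : Ω → Vec n, MemL2 (M.F1 i t) P βi' → (∀ᵐ ω ∂P, βi' ω ∈ M.A₁) →
    M.liftedHam δn i j t Xi xj yj Pi pj rj βi ≤ M.liftedHam δn i j t Xi xj yj Pi pj rj βi'

/-- an admissible mean-field control `βⁱ ∈ 𝔸₁ⁱ = H²(𝔽^{1,i};A₁)` -/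
def IsMFAdmissible (M : Mkt n m d₀ d₁ d₂ Ω P) (i : ℕ) (βi : ℝ → Ω → Vec n) : Prop :=
  MemH2 (M.F1 i) P M.T βi ∧ ∀ᵐ q ∂(leb2 P M.T), βi q.1 q.2 ∈ M.A₁

/-- the mean-field state dynamics of the representative pair `(i,j)` under a control
`βⁱ` of the representative cooperative agent -/
def IsMFStateSol (M : Mkt n m d₀ d₁ d₂ Ω P) (δn : ℝ) (i j : ℕ)
    (βi Xi xj yj : ℝ → Ω → Vec n) : Prop :=
  MemS2 (M.F1 i) P M.T Xi ∧ MemS2 (M.F2 j) P M.T xj ∧ MemS2 (M.F2 j) P M.T yj ∧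
  (∀ᵐ ω ∂P, ∀ t ∈ Set.Icc (0 : ℝ) M.T,
    Xi t ω = M.ξ i ω + (∫ s in (0 : ℝ)..t,
      (βi s ω + M.ρ₁ s ω • M.mfPrice δn s (yj s) (βi s) ω + M.l₁i i s ω)) + M.MX i t ω) ∧
  ∃ N : ℝ → Ω → Vec n, Martingale N (M.F2 j) P ∧ (∀ ω, N 0 ω = 0) ∧ MemS2 (M.F2 j) P M.T N ∧
    ∀ᵐ ω ∂P, ∀ t ∈ Set.Icc (0 : ℝ) M.T,
      (xj t ω = M.η j ω + (∫ s in (0 : ℝ)..t,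
          (-(M.Λinv s ω (yj s ω + M.mfPrice δn s (yj s) (βi s) ω))
            + M.ρ₂ s ω • M.mfPrice δn s (yj s) (βi s) ω + M.l₂j j s ω)) + M.Mx j t ω) ∧
      (yj t ω = M.gradg₂ j ω (xj M.T ω) + (∫ s in t..M.T,
          (M.gradfb₂ j s ω (xj s ω) - M.b s ω • M.mfPrice δn s (yj s) (βi s) ω))
          - (N M.T ω - N t ω))

/-- the mean-field cost `𝒥₁ⁱ(βⁱ)` of the representative cooperative agent -/
def Jmf (M : Mkt n m d₀ d₁ d₂ Ω P) (δn : ℝ) (i : ℕ)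
    (βi Xi yj : ℝ → Ω → Vec n) : ℝ :=
  ∫ ω, ((∫ t in (0 : ℝ)..M.T,
      M.f₁i i t ω (Xi t ω) (M.condLawG (Xi t) ω) (M.mfPrice δn t (yj t) (βi t) ω) (βi t ω))
    + M.g₁i i ω (Xi M.T ω) (M.condLawG (Xi M.T) ω)) ∂P

/-- the mean-field terminal map `G_{Pⁱ}`, with `Ẽ⁰[∂_μg̃₁ⁱ(X̃ⁱ_T,μ_T)(Xⁱ_T)]` written as an
integral against the conditional law of `(Xⁱ_T, cⁱ_T)` -/
def mfGP (M : Mkt n m d₀ d₁ d₂ Ω P) (i : ℕ) (XiT : Ω → Vec n) (ω : Ω) : Vec n :=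
  M.Dxg₁i i ω (XiT ω) (M.condLawG XiT ω)
    + ∫ z : Vec n × Vec m, M.Dμg₁ z.1 (M.condLawG XiT ω) (M.c0 M.T ω) z.2 (XiT ω)
        ∂(M.condLawG (fun ω' => (XiT ω', M.c1 i M.T ω')) ω)

/-- the mean-field drift `B_{rʲ}(t,u_t)` -/
def mfBr (M : Mkt n m d₀ d₁ d₂ Ω P) (δn : ℝ) (i j : ℕ) (t : ℝ)
    (Xi yj Pi pj rj βi : Ω → Vec n) (ω : Ω) : Vec n :=
  -(M.Λinv t ω ((P[pj|M.G0]) ω - pj ω) - M.ρ₂ t ω • ((P[pj|M.G0]) ω)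
      - M.b t ω • ((P[rj|M.G0]) ω) - δn • M.ρ₁ t ω • ((P[Pi|M.G0]) ω)
      - δn • ((P[fun ω' => M.Dϖf₁i i t ω' (Xi ω') (M.condLawG Xi ω')
          (M.mfPrice δn t yj βi ω') (βi ω')|M.G0]) ω))

/-- the mean-field driver `F_{Pⁱ}(t,u_t)` -/
def mfFP (M : Mkt n m d₀ d₁ d₂ Ω P) (δn : ℝ) (i : ℕ) (t : ℝ)
    (Xi yj βi : Ω → Vec n) (ω : Ω) : Vec n :=
  -(M.Dxf₁i i t ω (Xi ω) (M.condLawG Xi ω) (M.mfPrice δn t yj βi ω) (βi ω)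
      + ∫ z : Vec n × Vec n × Vec m,
          M.Dμf₁ t z.1 (M.condLawG Xi ω) (M.mfPrice δn t yj βi ω) z.2.1
            (M.c0 t ω) z.2.2 (Xi ω)
          ∂(M.condLawG (fun ω' => (Xi ω', βi ω', M.c1 i t ω')) ω))

/-- the full mean-field FBSDE system of conditional McKean–Vlasov type characterizing
the optimum of the conditional extended mean-field control problem -/
def IsMFSolFull (M : Mkt n m d₀ d₁ d₂ Ω P) (δn : ℝ) (i j : ℕ)
    (βh Xi xj yj Pi pj rj : ℝ → Ω → Vec n) : Prop :=
  M.IsMFAdmissible i βh ∧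
  M.IsMFStateSol δn i j βh Xi xj yj ∧
  MemS2 (M.F1 i) P M.T Pi ∧ MemS2 (M.F2 j) P M.T pj ∧ MemS2 (M.F2 j) P M.T rj ∧
  -- `β̂ⁱ_t` minimizes the lifted Hamiltonian `𝓗(t,u_t,·)` for `dt`-a.e. `t`
  (∀ᵐ t ∂(volume.restrict (Set.Icc (0 : ℝ) M.T)),
    M.IsLiftedMin δn i j t (Xi t) (xj t) (yj t) (Pi t) (pj t) (rj t) (βh t)) ∧
  -- backward equation for `Pⁱ`
  (∃ NP : ℝ → Ω → Vec n, Martingale NP (M.F1 i) P ∧ MemS2 (M.F1 i) P M.T NP ∧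
    ∀ᵐ ω ∂P, ∀ t ∈ Set.Icc (0 : ℝ) M.T,
      Pi t ω = M.mfGP i (Xi M.T) ω
        - (∫ s in t..M.T, M.mfFP δn i s (Xi s) (yj s) (βh s) ω) - (NP M.T ω - NP t ω)) ∧
  -- backward equation for `pʲ` and forward equation for `rʲ`
  (∃ Np : ℝ → Ω → Vec n, Martingale Np (M.F2 j) P ∧ MemS2 (M.F2 j) P M.T Np ∧
    ∀ᵐ ω ∂P, ∀ t ∈ Set.Icc (0 : ℝ) M.T,
      (pj t ω = -(M.cgj j ω (rj M.T ω))
        - (∫ s in t..M.T, M.cfj j s ω (rj s ω)) - (Np M.T ω - Np t ω)) ∧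
      (rj t ω = ∫ s in (0 : ℝ)..t,
        M.mfBr δn i j s (Xi s) (yj s) (Pi s) (pj s) (rj s) (βh s) ω))

/-- a family of random variables is `𝓕⁰`-conditionally i.i.d. -/
def CondIID (M : Mkt n m d₀ d₁ d₂ Ω P) {γ : Type} [MeasurableSpace γ]
    (ψ : ℕ → Ω → γ) : Prop :=
  iCondIndepFun M.G0 M.hG0 ψ P ∧
  ∀ (k : ℕ) (A : Set γ), MeasurableSet A →
    (P[(ψ k ⁻¹' A).indicator (fun _ => (1 : ℝ))|M.G0]) =ᵐ[P]
      (P[(ψ 0 ⁻¹' A).indicator (fun _ => (1 : ℝ))|M.G0])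

end MeanField

end Mkt


namespace Mkt

variable {n m d₀ d₁ d₂ : ℕ} {Ω : Type} [mΩ : MeasurableSpace Ω] {P : Measure Ω}

section MeanFieldMaps

variable [StandardBorelSpace Ω] [Nonempty Ω] [IsFiniteMeasure P]

/-- the mean-field drift `B_{Xⁱ}(t,u_t)` -/
def mfBX (M : Mkt n m d₀ d₁ d₂ Ω P) (δn : ℝ) (i : ℕ) (t : ℝ)
    (yj βi : Ω → Vec n) (ω : Ω) : Vec n :=
  βi ω + M.ρ₁ t ω • M.mfPrice δn t yj βi ω + M.l₁i i t ω

/-- the mean-field drift `B_{xʲ}(t,u_t)` -/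
def mfBx (M : Mkt n m d₀ d₁ d₂ Ω P) (δn : ℝ) (j : ℕ) (t : ℝ)
    (xj yj βi : Ω → Vec n) (ω : Ω) : Vec n :=
  -(M.Λinv t ω (yj ω + M.mfPrice δn t yj βi ω))
    + M.ρ₂ t ω • M.mfPrice δn t yj βi ω + M.l₂j j t ω

/-- the mean-field driver `F_{yʲ}(t,u_t)` -/
def mfFy (M : Mkt n m d₀ d₁ d₂ Ω P) (δn : ℝ) (j : ℕ) (t : ℝ)
    (xj yj βi : Ω → Vec n) (ω : Ω) : Vec n :=
  -(M.gradfb₂ j t ω (xj ω)) + M.b t ω • M.mfPrice δn t yj βi ω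

/-- the mean-field driver `F_{pʲ}(t,u_t)` -/
def mfFp (M : Mkt n m d₀ d₁ d₂ Ω P) (j : ℕ) (t : ℝ) (rj : Ω → Vec n) (ω : Ω) : Vec n :=
  M.cfj j t ω (rj ω)

end MeanFieldMaps

end Mkt

end

section EmpiricalCoupling

open Finset

variable {α : Type*} [MeasurableSpace α]

noncomputable def empCoup (N : ℕ) (X X' : ℕ → α) : Measure (α × α) :=
  ((N : ℝ≥0∞))⁻¹ • ∑ k ∈ range N, Measure.dirac (X k, X' k)

lemma isProbabilityMeasure_empCoup {N : ℕ} (hN : 0 < N) (X X' : ℕ → α) :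
    IsProbabilityMeasure (empCoup N X X') := by
  constructor
  simp only [empCoup, Measure.smul_apply, Measure.coe_finsetSum, Finset.sum_apply,
    Measure.dirac_apply_of_mem (Set.mem_univ _), sum_const, card_range, nsmul_eq_mul,
    mul_one, smul_eq_mul]
  exact ENNReal.inv_mul_cancel (by exact_mod_cast hN.ne') (ENNReal.natCast_ne_top N)

lemma map_empCoup {β : Type*} [MeasurableSpace β] {f : α × α → β} (hf : Measurable f)
    (N : ℕ) (X X' : ℕ → α) :
    (empCoup N X X').map f = ((N : ℝ≥0∞))⁻¹ • ∑ k ∈ range N, Measure.dirac (f (X k, X' k)) := by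
  rw [empCoup, Measure.map_smul, Measure.map_finset_sum hf.aemeasurable]
  simp only [Measure.map_dirac' hf]

lemma map_fst_empCoup {n : ℕ} (N : ℕ) (X X' : ℕ → Vec n) :
    (empCoup N X X').map Prod.fst = empMeas N X :=
  map_empCoup measurable_fst N X X'

lemma map_snd_empCoup {n : ℕ} (N : ℕ) (X X' : ℕ → Vec n) :
    (empCoup N X X').map Prod.snd = empMeas N X' :=
  map_empCoup measurable_snd N X X'

lemma integral_empCoup [MeasurableSingletonClass α] (N : ℕ) (X X' : ℕ → α) (f : α × α → ℝ) :
    ∫ p, f p ∂(empCoup N X X') = (N : ℝ)⁻¹ * ∑ k ∈ range N, f (X k, X' k) := by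
  rw [empCoup, integral_smul_measure,
    integral_finsetSum_measure fun k _ => integrable_dirac (by simp)]
  simp [integral_dirac, ENNReal.toReal_inv]

end EmpiricalCoupling

namespace Mkt

open Finset

variable {n m d₀ d₁ d₂ : ℕ} {Ω : Type} [MeasurableSpace Ω] {P : Measure Ω}
  (M : Mkt n m d₀ d₁ d₂ Ω P)

/-- Adding the convexity inequality of `g₁` along the empirical coupling and along its reverse
makes the values of `g₁` cancel. -/
lemma le_inner_Dxg₁_sub_add_sum_inner_Dμg₁_sub {N : ℕ} (hN : 0 < N) (X X' : ℕ → Vec n)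
    (x x' : Vec n) (c0 c : Vec m) :
    M.γ1g * ‖x - x'‖ ^ 2 ≤
      ⟪M.Dxg₁ x (empMeas N X) c0 c - M.Dxg₁ x' (empMeas N X') c0 c, x - x'⟫
        + (N : ℝ)⁻¹ * ∑ k ∈ range N,
          ⟪M.Dμg₁ x (empMeas N X) c0 c (X k) - M.Dμg₁ x' (empMeas N X') c0 c (X' k),
            X k - X' k⟫ := by
  have h := M.hg₁convex x _ x' _ c0 c _ (isProbabilityMeasure_empCoup hN X X')
    (map_fst_empCoup N X X') (map_snd_empCoup N X X')
  have h' := M.hg₁convex x' _ x _ c0 c _ (isProbabilityMeasure_empCoup hN X' X)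
    (map_fst_empCoup N X' X) (map_snd_empCoup N X' X)
  rw [integral_empCoup] at h h'
  simp only [← neg_sub x x', ← neg_sub (X _) (X' _), inner_neg_right, sum_neg_distrib,
    norm_neg] at h
  simp only [inner_sub_left, sum_sub_distrib, mul_sub] at h h' ⊢
  linarith

lemma inner_GPf_sub (N : ℕ) (ω : Ω) (X X' : ℕ → Vec n) (i : ℕ) (v : Vec n) :
    ⟪M.GPf N ω X i - M.GPf N ω X' i, v⟫ =
      ⟪M.Dxg₁i i ω (X i) (empMeas N X) - M.Dxg₁i i ω (X' i) (empMeas N X'), v⟫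
        + (N : ℝ)⁻¹ * ∑ k ∈ range N,
          ⟪M.Dμg₁i k ω (X k) (empMeas N X) (X i) - M.Dμg₁i k ω (X' k) (empMeas N X') (X' i),
            v⟫ := by
  simp only [GPf, inner_sub_left, inner_add_left, real_inner_smul_left, sum_inner,
    sum_sub_distrib]
  ring

/-- After summing over `i`, the double sum of `L`-derivative terms is reindexed so that each
agent's own convexity inequality applies. -/
lemma le_sum_inner_GPf_sub (N : ℕ) (ω : Ω) (X X' : ℕ → Vec n) :
    M.γ1g * ∑ i ∈ range N, ‖X i - X' i‖ ^ 2 ≤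
      ∑ i ∈ range N, ⟪M.GPf N ω X i - M.GPf N ω X' i, X i - X' i⟫ := by
  rcases N.eq_zero_or_pos with rfl | hN
  · simp
  calc M.γ1g * ∑ i ∈ range N, ‖X i - X' i‖ ^ 2
      = ∑ i ∈ range N, M.γ1g * ‖X i - X' i‖ ^ 2 := mul_sum _ _ _
    _ ≤ ∑ i ∈ range N,
          (⟪M.Dxg₁i i ω (X i) (empMeas N X) - M.Dxg₁i i ω (X' i) (empMeas N X'), X i - X' i⟫
            + (N : ℝ)⁻¹ * ∑ k ∈ range N,
              ⟪M.Dμg₁i i ω (X i) (empMeas N X) (X k)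
                - M.Dμg₁i i ω (X' i) (empMeas N X') (X' k), X k - X' k⟫) :=
        sum_le_sum fun i _ => M.le_inner_Dxg₁_sub_add_sum_inner_Dμg₁_sub hN X X' _ _ _ _
    _ = ∑ i ∈ range N, ⟪M.GPf N ω X i - M.GPf N ω X' i, X i - X' i⟫ := by
        simp only [inner_GPf_sub, sum_add_distrib, ← mul_sum]
        rw [sum_comm (s := range N)]

lemma mul_norm_sq_le_inner_cgj (j : ℕ) (ω : Ω) (θ : Vec n) :
    M.γ2g * ‖θ‖ ^ 2 ≤ ⟪M.cgj j ω θ, θ⟫ :=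
  real_inner_comm θ (M.cgj j ω θ) ▸ M.hcgpos _ _ θ

lemma Gyf_sub (ω : Ω) (x x' : ℕ → Vec n) (j : ℕ) :
    M.Gyf ω x j - M.Gyf ω x' j = M.cgj j ω (x j - x' j) := by
  simp only [Gyf, gradg₂, cgj, map_sub]
  abel

lemma neg_one_smul_Gpf_sub (ω : Ω) (r r' : ℕ → Vec n) (j : ℕ) :
    (-1 : ℝ) • (M.Gpf ω r j - M.Gpf ω r' j) = M.cgj j ω (r j - r' j) := by
  simp only [Gpf, map_sub, neg_one_smul, sub_neg_eq_add]
  abel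

end Mkt

section Statements

variable {n m d₀ d₁ d₂ : ℕ} {Ω : Type} [mΩ : MeasurableSpace Ω] {P : Measure Ω}

theorem statement4_general (M : Mkt n m d₀ d₁ d₂ Ω P)
    (N₁ N₂ : ℕ) (ω : Ω) (X x r X' x' r' : ℕ → Vec n) :
    (∑ i ∈ Finset.range N₁, ⟪M.GPf N₁ ω X i - M.GPf N₁ ω X' i, X i - X' i⟫)
      + ∑ j ∈ Finset.range N₂,
          (⟪M.Gyf ω x j - M.Gyf ω x' j, x j - x' j⟫
            + ⟪(-1 : ℝ) • (M.Gpf ω r j - M.Gpf ω r' j), r j - r' j⟫)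
    ≥ M.γ1g * ∑ i ∈ Finset.range N₁, ‖X i - X' i‖ ^ 2
      + M.γ2g * ∑ j ∈ Finset.range N₂, (‖x j - x' j‖ ^ 2 + ‖r j - r' j‖ ^ 2) := by
  have hcoop := M.le_sum_inner_GPf_sub N₁ ω X X'
  have hnoncoop : M.γ2g * ∑ j ∈ Finset.range N₂, (‖x j - x' j‖ ^ 2 + ‖r j - r' j‖ ^ 2) ≤
      ∑ j ∈ Finset.range N₂,
        (⟪M.Gyf ω x j - M.Gyf ω x' j, x j - x' j⟫
          + ⟪(-1 : ℝ) • (M.Gpf ω r j - M.Gpf ω r' j), r j - r' j⟫) := by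
    rw [Finset.mul_sum]
    refine Finset.sum_le_sum fun j _ => ?_
    rw [M.Gyf_sub, M.neg_one_smul_Gpf_sub, mul_add]
    exact add_le_add (M.mul_norm_sq_le_inner_cgj j ω _) (M.mul_norm_sq_le_inner_cgj j ω _)
  linarith

/-- Under Assumptions (A2)–(A3) the terminal maps
`G_{Pⁱ}, G_{yʲ}, G_{pʲ}` satisfy the Peng–Wu monotonicity inequality with constants
`γ₁^g` and `γ₂^g`. -/
theorem statement4 [IsProbabilityMeasure P] (M : Mkt n m d₀ d₁ d₂ Ω P)
    (N₁ N₂ : ℕ) (hN₁ : 0 < N₁) (hN₂ : 0 < N₂) (hδ : (N₁ : ℝ) / (N₂ : ℝ) ≤ M.L)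
    (ω : Ω) (X x r X' x' r' : ℕ → Vec n) :
    (∑ i ∈ Finset.range N₁, ⟪M.GPf N₁ ω X i - M.GPf N₁ ω X' i, X i - X' i⟫)
      + ∑ j ∈ Finset.range N₂,
          (⟪M.Gyf ω x j - M.Gyf ω x' j, x j - x' j⟫
            + ⟪(-1 : ℝ) • (M.Gpf ω r j - M.Gpf ω r' j), r j - r' j⟫)
    ≥ M.γ1g * ∑ i ∈ Finset.range N₁, ‖X i - X' i‖ ^ 2
      + M.γ2g * ∑ j ∈ Finset.range N₂, (‖x j - x' j‖ ^ 2 + ‖r j - r' j‖ ^ 2) :=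
  statement4_general M N₁ N₂ ω X x r X' x' r'

end Statements
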